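/- Let n ≥ 2 and let {|y_{x_y}⟩}_{x_y=1}^d (y = 1,…,n) be any n orthonormal bases of ℂ^d. Then ∑_{x ∈ [d]^n} ∑_{σ ∈ S_n, σ an n-cycle} ∏_{y=1}^n ⟨y_{x_y}|σ(y)_{x_{σ(y)}}⟩ = (n−1)!·d. Consequently, if the quantity ∑_{σ an n-cycle} ∏_{y=1}^n ⟨y_{x_y}|σ(y)_{x_{σ(y)}}⟩ takes the same value for every x ∈ [d]^n, that common value must be (n−1)!/d^{n−1}. -/

import Mathlib

/-!
Write `⟪B y i, B z j⟫` as the `(i, j)` entry of the change-of-basis matrix from `B z` to `B y`.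
Expanding a trace of a product of matrices as a sum over closed walks, the sum over `x` for a
fixed `n`-cycle `σ` becomes the trace of the product of the change-of-basis matrices taken
around the cycle. That product telescopes to the identity, so every `n`-cycle contributes `d`;
there are `(n - 1)!` of them. If the inner sum is a constant `v`, the total is `d ^ n * v`.
-/

open scoped InnerProductSpace

open scoped Classical in
/-- The set of full cycles (`card ι`-cycles) in the permutation group of `ι`. -/
noncomputable def nCycles (ι : Type) [Fintype ι] [DecidableEq ι] : Finset (Equiv.Perm ι) :=
  Finset.univ.filter fun σ => σ.IsCycle ∧ σ.support = Finset.univ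

open Finset Equiv

namespace Matrix

variable {κ R : Type*} [Fintype κ] [DecidableEq κ] [CommSemiring R]

theorem list_ofFn_prod_mul_apply {m : ℕ} (M : Fin m → Matrix κ κ R) (N : Matrix κ κ R)
    (i j : κ) :
    ((List.ofFn M).prod * N) i j =
      ∑ a : Fin m → κ, (∏ k, M k (vecCons i a k.castSucc) (vecCons i a k.succ)) *
        N (vecCons i a (Fin.last m)) j := by
  induction m generalizing i with
  | zero => simp
  | succ m ih =>
    rw [← (Fin.consEquiv fun _ => κ).sum_comp, Fintype.sum_prod_type, List.ofFn_succ,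
      List.prod_cons, Matrix.mul_assoc, mul_apply]
    refine Fintype.sum_congr _ _ fun l => ?_
    rw [ih, Finset.mul_sum]
    refine Fintype.sum_congr _ _ fun a => ?_
    simp only [cons_val_succ, Fin.consEquiv, Equiv.coe_fn_mk, Fin.prod_univ_succ, Fin.castSucc_zero,
      cons_val_zero, Fin.cons_zero, Fin.castSucc_succ, Fin.cons_succ, mul_assoc]
    rfl

theorem sum_prod_apply_finRotate {m : ℕ} (M : Fin (m + 1) → Matrix κ κ R) :
    ∑ a : Fin (m + 1) → κ, ∏ k, M k (a k) (a (finRotate _ k)) = trace (List.ofFn M).prod := by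
  rw [List.ofFn_succ', List.prod_concat, trace, ← (Fin.consEquiv fun _ => κ).sum_comp,
    Fintype.sum_prod_type]
  refine Fintype.sum_congr _ _ fun i => ?_
  rw [diag_apply, list_ofFn_prod_mul_apply]
  refine Fintype.sum_congr _ _ fun a => ?_
  simp only [Fin.consEquiv, Equiv.coe_fn_mk, finRotate_apply, Fin.prod_univ_castSucc,
    Fin.coeSucc_eq_succ, Fin.cons_succ, Fin.last_add_one, Fin.cons_zero, cons_val_succ]
  rfl

end Matrix

namespace Module.Basis

variable {κ R M : Type*} [Fintype κ] [DecidableEq κ] [CommSemiring R] [AddCommMonoid M]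
  [Module R M]

theorem list_ofFn_toMatrix_prod {m : ℕ} (b : Fin (m + 1) → Basis κ R M) :
    (List.ofFn fun k : Fin m => (b k.castSucc).toMatrix (b k.succ)).prod =
      (b 0).toMatrix (b (Fin.last m)) := by
  induction m with
  | zero => simp [toMatrix_self]
  | succ m ih =>
    rw [List.ofFn_succ, List.prod_cons]
    simp only [Fin.castSucc_zero, ← Fin.succ_castSucc]
    rw [ih fun k => b k.succ, Fin.succ_last, toMatrix_mul_toMatrix]

theorem sum_prod_toMatrix_apply_finRotate {m : ℕ} (b : Fin (m + 1) → Basis κ R M) :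
    ∑ a : Fin (m + 1) → κ, ∏ k, (b k).toMatrix (b (finRotate _ k)) (a k) (a (finRotate _ k)) =
      Fintype.card κ := by
  rw [Matrix.sum_prod_apply_finRotate, List.ofFn_succ', List.prod_concat]
  simp only [finRotate_apply, Fin.coeSucc_eq_succ, list_ofFn_toMatrix_prod, Fin.last_add_one,
    toMatrix_mul_toMatrix, toMatrix_self, Matrix.trace_one]

end Module.Basis

theorem Fintype.sum_pi_prod_eq_of_semiconj {ι ι' κ R : Type*} [Fintype ι] [Fintype ι']
    [DecidableEq ι] [DecidableEq ι'] [Fintype κ] [CommSemiring R] (c : ι' ≃ ι) {σ : Perm ι}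
    {τ : Perm ι'} (h : Function.Semiconj c τ σ) (f : ι → ι → κ → κ → R) :
    ∑ x : ι → κ, ∏ y, f y (σ y) (x y) (x (σ y)) =
      ∑ x : ι' → κ, ∏ k, f (c k) (c (τ k)) (x k) (x (τ k)) := by
  refine Fintype.sum_equiv (c.arrowCongr (Equiv.refl κ)).symm _ _ fun x => ?_
  refine (Fintype.prod_equiv c _ _ fun k => ?_).symm
  simp [h k]

open Equiv.Perm in
theorem OrthonormalBasis.sum_prod_inner_of_isCycle {κ 𝕜 E : Type*} [Fintype κ] [RCLike 𝕜]
    [NormedAddCommGroup E] [InnerProductSpace 𝕜 E] {n : ℕ}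
    (B : Fin n → OrthonormalBasis κ 𝕜 E) {σ : Perm (Fin n)} (hσ : σ.IsCycle)
    (hsupp : σ.support = univ) :
    ∑ x : Fin n → κ, ∏ y, ⟪B y (x y), B (σ y) (x (σ y))⟫_𝕜 = Fintype.card κ := by
  classical
  have hn : 2 ≤ n := by simpa [hsupp] using hσ.two_le_card_support
  obtain ⟨m, rfl⟩ : ∃ m, n = m + 1 := ⟨n - 1, by omega⟩
  obtain ⟨c, rfl⟩ := isConj_iff.mp <| (isCycle_finRotate_of_le hn).isConj hσ <| by
    rw [support_finRotate_of_le hn, hsupp]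
  have hc : Function.Semiconj c (finRotate _) ⇑(c * finRotate (m + 1) * c⁻¹) := fun k => by
    simp [Perm.mul_apply]
  rw [Fintype.sum_pi_prod_eq_of_semiconj c hc fun y z i j => ⟪B y i, B z j⟫_𝕜]
  simpa [Module.Basis.toMatrix_apply, OrthonormalBasis.repr_apply_apply] using
    Module.Basis.sum_prod_toMatrix_apply_finRotate fun k => (B (c k)).toBasis

section nCycles

variable {ι : Type} [Fintype ι] [DecidableEq ι] {σ : Perm ι}

theorem mem_nCycles : σ ∈ nCycles ι ↔ σ.IsCycle ∧ σ.support = univ := by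
  simp [nCycles]

theorem mem_nCycles_iff_cycleType : σ ∈ nCycles ι ↔ σ.cycleType = {Fintype.card ι} := by
  rw [mem_nCycles]
  constructor
  · rintro ⟨hσ, hsupp⟩
    rw [hσ.cycleType, hsupp, card_univ]
  · intro h
    have hσ : σ.IsCycle := Perm.card_cycleType_eq_one.mp (by simp [h])
    refine ⟨hσ, eq_univ_of_card _ ?_⟩
    simpa [hσ.cycleType] using h

theorem card_nCycles (hι : 2 ≤ Fintype.card ι) :
    #(nCycles ι) = (Fintype.card ι - 1).factorial := by
  have : nCycles ι = ({σ | σ.cycleType = {Fintype.card ι}} : Finset (Perm ι)) := by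
    ext σ
    rw [mem_nCycles_iff_cycleType, mem_filter, and_iff_right (mem_univ σ)]
  rw [this, Perm.card_of_cycleType]
  simp only [Multiset.sum_singleton, le_refl, Multiset.mem_singleton,
    forall_eq, hι, and_self, ↓reduceIte, tsub_self, Nat.factorial_zero, Multiset.prod_singleton,
    one_mul, Multiset.toFinset_singleton, prod_singleton, Multiset.count_singleton_self,
    Nat.factorial_one, mul_one]
  rw [← Nat.mul_factorial_pred (by omega : Fintype.card ι ≠ 0),
    Nat.mul_div_cancel_left _ (by omega)]

end nCycles

/-- For any `n ≥ 2` orthonormal bases of `ℂ^d`, summing the `n`-cycle overlap expression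
over all index tuples gives `(n−1)!·d`; consequently, if that expression has the same value
for every index tuple, this common value is `(n−1)!/d^(n−1)`. -/
theorem stmt_6 (n d : ℕ) (hn : 2 ≤ n) (hd : 1 ≤ d)
    (B : Fin n → OrthonormalBasis (Fin d) ℂ (EuclideanSpace ℂ (Fin d))) :
    ((∑ x : Fin n → Fin d, ∑ σ ∈ nCycles (Fin n),
        ∏ y, ⟪B y (x y), B (σ y) (x (σ y))⟫_ℂ)
      = ((n - 1).factorial : ℂ) * d) ∧
    (∀ v : ℂ, (∀ x : Fin n → Fin d,
        (∑ σ ∈ nCycles (Fin n), ∏ y, ⟪B y (x y), B (σ y) (x (σ y))⟫_ℂ) = v) →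
      v = ((n - 1).factorial : ℂ) / (d : ℂ) ^ (n - 1)) := by
  have htotal : (∑ x : Fin n → Fin d, ∑ σ ∈ nCycles (Fin n),
      ∏ y, ⟪B y (x y), B (σ y) (x (σ y))⟫_ℂ) = ((n - 1).factorial : ℂ) * d := by
    have hcycle (σ) (hσ : σ ∈ nCycles (Fin n)) :=
      OrthonormalBasis.sum_prod_inner_of_isCycle B (mem_nCycles.mp hσ).1 (mem_nCycles.mp hσ).2
    rw [Finset.sum_comm, Finset.sum_congr rfl hcycle, sum_const,
      card_nCycles (by simpa using hn), nsmul_eq_mul, Fintype.card_fin, Fintype.card_fin]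
  refine ⟨htotal, fun v hv => ?_⟩
  have hconst : (d : ℂ) ^ n * v = (n - 1).factorial * d := by
    rw [← htotal, Finset.sum_congr rfl fun x _ => hv x]
    simp
  have hpow : (d : ℂ) ^ n = d ^ (n - 1) * d := by rw [← pow_succ, Nat.sub_add_cancel (by omega)]
  have hd0 : (d : ℂ) ≠ 0 := Nat.cast_ne_zero.mpr (by omega)
  rw [eq_div_iff (pow_ne_zero _ hd0)]
  exact mul_right_cancel₀ hd0 (by linear_combination hconst - v * hpow)
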